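/- arXiv:1612.06976 — 2 statements merged into one kernel-verified Lean document; each statement's English description precedes it below -/
import Mathlib

section
/- Let p > 1 and let F : [0,∞) → [0,∞) be a C² convex function with F(0) = 0 and F'(0) = 0, and define Φ on symmetric n×n matrices by Φ(B) = F(|B|). If the Hessian of Φ satisfies γ₁(1+|B|²)^((p-2)/2)|C|² ≤ Σ (∂²Φ/∂B_{jk}∂B_{lm})(B) C_{jk} C_{lm} for all symmetric B, C, then the induced stress S(B) = ∂Φ/∂B = F'(|B|) B/|B| satisfies the coercivity estimate Σ_{i,j} S_{ij}(B) B_{ij} ≥ c₁ γ₁ (1+|B|²)^((p-2)/2) |B|² for all symmetric matrices B, with a constant c₁ > 0 independent of γ₁. -/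
/-!
Along the line through the symmetric matrix `E` with a single entry `1` on the diagonal,
`Φ (s • E) = F s` for `s > 0`, so the Hessian bound in direction `E` reads
`F'' s ≥ γ₁ (1 + s²)^((p-2)/2)`. As `s ↦ s (1 + s²)^((p-2)/2)` has derivative at most
`p (1 + s²)^((p-2)/2)` when `p ≥ 1`, integrating from `F' 0 = 0` gives
`F' r ≥ (γ₁ / p) r (1 + r²)^((p-2)/2)`; since `S(B) : B = F'(|B|) |B|`, one may take
`c₁ = 1 / p`.
-/

open Real

/-- Frobenius norm of an `n × n` real matrix (represented as a function). -/
noncomputable def frob {n : ℕ} (B : Fin n → Fin n → ℝ) : ℝ :=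
  Real.sqrt (∑ i, ∑ j, (B i j) ^ 2)

/-- The stress tensor `S(B) = F'(|B|) B / |B|`, extended by `S(0) = 0`. -/
noncomputable def stress {n : ℕ} (F : ℝ → ℝ) (B : Fin n → Fin n → ℝ) : Fin n → Fin n → ℝ :=
  if B = 0 then 0 else (deriv F (frob B) / frob B) • B

open Set Topology

section Frobenius

variable {n : ℕ}

@[simp]
lemma frob_zero : frob (0 : Fin n → Fin n → ℝ) = 0 := by
  simp [frob]

lemma frob_nonneg (B : Fin n → Fin n → ℝ) : 0 ≤ frob B := Real.sqrt_nonneg _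

lemma frob_sq (B : Fin n → Fin n → ℝ) : frob B ^ 2 = ∑ i, ∑ j, B i j ^ 2 :=
  Real.sq_sqrt (by positivity)

lemma frob_eq_zero_iff {B : Fin n → Fin n → ℝ} : frob B = 0 ↔ B = 0 := by
  rw [frob, Real.sqrt_eq_zero (by positivity),
    Fintype.sum_eq_zero_iff_of_nonneg fun _ => by positivity, funext_iff, funext_iff]
  refine forall_congr' fun i => ?_
  rw [Pi.zero_apply, Pi.zero_apply, Fintype.sum_eq_zero_iff_of_nonneg fun _ => sq_nonneg _]
  simp [funext_iff]

lemma frob_smul (t : ℝ) (B : Fin n → Fin n → ℝ) : frob (t • B) = |t| * frob B := by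
  simp only [frob, Pi.smul_apply, smul_eq_mul, mul_pow, ← Finset.mul_sum]
  rw [Real.sqrt_mul (sq_nonneg t), Real.sqrt_sq_eq_abs]

lemma contDiffAt_frob {B : Fin n → Fin n → ℝ} (hB : B ≠ 0) : ContDiffAt ℝ 2 frob B := by
  have hsum : ContDiff ℝ 2 fun A : Fin n → Fin n → ℝ => ∑ i, ∑ j, A i j ^ 2 := by fun_prop
  have hpos : ∑ i, ∑ j, B i j ^ 2 ≠ 0 := by
    rw [← frob_sq]; exact pow_ne_zero 2 (mt frob_eq_zero_iff.mp hB)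
  exact (Real.contDiffAt_sqrt hpos).comp B hsum.contDiffAt

lemma frob_single_single (z : Fin n) : frob (Pi.single z (Pi.single z 1)) = 1 := by
  simp [frob, Pi.single_apply, ite_apply, apply_ite (· ^ 2)]

lemma sum_stress_mul_self (F : ℝ → ℝ) (B : Fin n → Fin n → ℝ) :
    ∑ i, ∑ j, stress F B i j * B i j = deriv F (frob B) * frob B := by
  by_cases hB : B = 0
  · simp [stress, hB]
  have hr : frob B ≠ 0 := mt frob_eq_zero_iff.mp hB
  simp only [stress, if_neg hB, Pi.smul_apply, smul_eq_mul, mul_assoc, ← Finset.mul_sum, ← sq]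
  rw [← frob_sq]
  field_simp

end Frobenius

section LineRestriction

variable {V W : Type*} [NormedAddCommGroup V] [NormedSpace ℝ V]
  [NormedAddCommGroup W] [NormedSpace ℝ W]

lemma hasDerivAt_comp_smul_const {g : V → W} {E : V} {s : ℝ}
    (hg : DifferentiableAt ℝ g (s • E)) :
    HasDerivAt (fun v : ℝ => g (v • E)) (fderiv ℝ g (s • E) E) s := by
  simpa [Function.comp_def] using hg.hasFDerivAt.comp_hasDerivAt s ((hasDerivAt_id s).smul_const E)

lemma deriv_deriv_comp_smul_const {Φ : V → ℝ} {E : V} {s : ℝ}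
    (hΦ : ContDiffAt ℝ 2 Φ (s • E)) :
    deriv (deriv fun v : ℝ => Φ (v • E)) s = fderiv ℝ (fun A => fderiv ℝ Φ A E) (s • E) E := by
  have hline : ∀ᶠ v in 𝓝 s, ContDiffAt ℝ 2 Φ (v • E) :=
    (continuous_id.smul continuous_const).continuousAt.eventually (hΦ.eventually (by simp))
  have hderiv : deriv (fun v : ℝ => Φ (v • E)) =ᶠ[𝓝 s] fun v => fderiv ℝ Φ (v • E) E := by
    filter_upwards [hline] with v hv
    exact (hasDerivAt_comp_smul_const (hv.differentiableAt (by simp))).deriv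
  have hfderiv : DifferentiableAt ℝ (fun A => fderiv ℝ Φ A E) (s • E) :=
    ((hΦ.fderiv_right (m := 1) le_rfl).differentiableAt one_ne_zero).clm_apply
      (differentiableAt_const E)
  rw [hderiv.deriv_eq, (hasDerivAt_comp_smul_const hfderiv).deriv]

end LineRestriction

lemma le_deriv_deriv_of_hessian {n : ℕ} (z : Fin n) {F : ℝ → ℝ}
    {Φ : (Fin n → Fin n → ℝ) → ℝ} {w : ℝ → ℝ} (hF : ContDiff ℝ 2 F)
    (hΦ : ∀ B, Φ B = F (frob B))
    (hHess : ∀ B C : Fin n → Fin n → ℝ, (∀ i j, B i j = B j i) → (∀ i j, C i j = C j i) →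
      w (frob B) * frob C ^ 2 ≤ fderiv ℝ (fun A => fderiv ℝ Φ A C) B C)
    {s : ℝ} (hs : 0 < s) : w s ≤ deriv (deriv F) s := by
  set E : Fin n → Fin n → ℝ := Pi.single z (Pi.single z 1)
  have hE : frob E = 1 := frob_single_single z
  have hE_symm : ∀ i j, E i j = E j i := by
    intro i j
    simp only [E, Pi.single_apply, ite_apply, Pi.zero_apply]
    split_ifs <;> simp_all
  have hsE : frob (s • E) = s := by rw [frob_smul, hE, abs_of_pos hs, mul_one]
  have hline : F =ᶠ[𝓝 s] fun v => Φ (v • E) := by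
    filter_upwards [eventually_gt_nhds hs] with v hv
    rw [hΦ, frob_smul, hE, abs_of_pos hv, mul_one]
  have hΦ_smooth : ContDiffAt ℝ 2 Φ (s • E) := by
    rw [funext hΦ]
    refine hF.contDiffAt.comp _ (contDiffAt_frob fun h => ?_)
    rw [h, frob_zero] at hsE
    exact hs.ne hsE
  have := hHess (s • E) E (fun i j => by simp [hE_symm i j]) hE_symm
  rwa [hsE, hE, one_pow, mul_one, ← deriv_deriv_comp_smul_const hΦ_smooth,
    ← hline.deriv.deriv_eq] at this

lemma hasDerivAt_mul_one_add_sq_rpow (α x : ℝ) :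
    HasDerivAt (fun x : ℝ => x * (1 + x ^ 2) ^ α)
      ((1 + x ^ 2) ^ α + 2 * α * x ^ 2 * (1 + x ^ 2) ^ (α - 1)) x := by
  have hbase : HasDerivAt (fun x : ℝ => 1 + x ^ 2) (2 * x) x := by
    simpa using (hasDerivAt_pow 2 x).const_add 1
  refine ((hasDerivAt_id' x).mul
    (hbase.rpow_const (p := α) (Or.inl (by positivity)))).congr_deriv ?_
  ring

lemma deriv_mul_one_add_sq_rpow_le {p : ℝ} (hp : 1 ≤ p) (x : ℝ) :
    (1 + x ^ 2) ^ ((p - 2) / 2) + 2 * ((p - 2) / 2) * x ^ 2 * (1 + x ^ 2) ^ ((p - 2) / 2 - 1)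
      ≤ p * (1 + x ^ 2) ^ ((p - 2) / 2) := by
  have hu : 0 < 1 + x ^ 2 := by positivity
  rw [Real.rpow_sub_one hu.ne']
  rw [← sub_nonneg]
  have : p * (1 + x ^ 2) ^ ((p - 2) / 2) - ((1 + x ^ 2) ^ ((p - 2) / 2) +
      2 * ((p - 2) / 2) * x ^ 2 * ((1 + x ^ 2) ^ ((p - 2) / 2) / (1 + x ^ 2)))
      = (p - 1 + x ^ 2) / (1 + x ^ 2) * (1 + x ^ 2) ^ ((p - 2) / 2) := by
    field_simp
    ring
  rw [this]
  have : 0 ≤ p - 1 + x ^ 2 := by linarith [sq_nonneg x]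
  positivity

lemma mul_one_add_sq_rpow_le_of_le_deriv {f : ℝ → ℝ} {γ p : ℝ} (hp : 1 ≤ p) (hγ : 0 ≤ γ)
    (hf : ContinuousOn f (Ici 0)) (hf' : DifferentiableOn ℝ f (Ioi 0)) (hf0 : f 0 = 0)
    (hbound : ∀ s, 0 < s → γ * (1 + s ^ 2) ^ ((p - 2) / 2) ≤ deriv f s)
    {r : ℝ} (hr : 0 ≤ r) : γ / p * r * (1 + r ^ 2) ^ ((p - 2) / 2) ≤ f r := by
  set ψ := fun x : ℝ => f x - γ / p * (x * (1 + x ^ 2) ^ ((p - 2) / 2))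
  have hψ : ∀ x, 0 < x → HasDerivAt ψ (deriv f x - γ / p * ((1 + x ^ 2) ^ ((p - 2) / 2)
      + 2 * ((p - 2) / 2) * x ^ 2 * (1 + x ^ 2) ^ ((p - 2) / 2 - 1))) x := fun x hx =>
    ((hf' x hx).differentiableAt (Ioi_mem_nhds hx)).hasDerivAt.sub
      ((hasDerivAt_mul_one_add_sq_rpow _ x).const_mul _)
  have hmono : MonotoneOn ψ (Ici 0) := by
    refine monotoneOn_of_deriv_nonneg (convex_Ici 0) ?_ ?_ ?_
    · refine hf.sub (continuous_const.mul ?_).continuousOn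
      exact continuous_iff_continuousAt.2 fun x => (hasDerivAt_mul_one_add_sq_rpow _ x).continuousAt
    · rw [interior_Ici]
      exact fun x hx => (hψ x hx).differentiableAt.differentiableWithinAt
    · rw [interior_Ici]
      intro x hx
      rw [(hψ x hx).deriv, sub_nonneg]
      calc γ / p * _ ≤ γ / p * (p * (1 + x ^ 2) ^ ((p - 2) / 2)) :=
            mul_le_mul_of_nonneg_left (deriv_mul_one_add_sq_rpow_le hp x) (by positivity)
        _ = γ * (1 + x ^ 2) ^ ((p - 2) / 2) := by field_simp
        _ ≤ deriv f x := hbound x hx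
  have := hmono self_mem_Ici hr hr
  simp only [ψ, hf0] at this
  linarith

theorem stmt0 (n : ℕ) (p : ℝ) (hp : 1 < p) :
    ∃ c₁ > (0 : ℝ), ∀ γ₁ : ℝ, 0 < γ₁ →
      ∀ (F : ℝ → ℝ) (Φ : (Fin n → Fin n → ℝ) → ℝ),
        ContDiff ℝ 2 F → ConvexOn ℝ (Set.Ici 0) F → F 0 = 0 → deriv F 0 = 0 →
        (∀ B, Φ B = F (frob B)) →
        (∀ B C : Fin n → Fin n → ℝ, (∀ i j, B i j = B j i) → (∀ i j, C i j = C j i) →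
          γ₁ * (1 + frob B ^ 2) ^ ((p - 2) / 2) * frob C ^ 2 ≤
            fderiv ℝ (fun A => fderiv ℝ Φ A C) B C) →
        ∀ B : Fin n → Fin n → ℝ, (∀ i j, B i j = B j i) →
          c₁ * γ₁ * (1 + frob B ^ 2) ^ ((p - 2) / 2) * frob B ^ 2 ≤
            ∑ i, ∑ j, stress F B i j * B i j := by
  refine ⟨1 / p, by positivity, fun γ₁ hγ₁ F Φ hF _ _ hF'0 hΦ hHess B _ => ?_⟩
  rw [sum_stress_mul_self]
  by_cases hB : B = 0
  · simp [hB]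
  obtain ⟨z, -⟩ := Function.ne_iff.mp hB
  have hF'' : ∀ s, 0 < s → γ₁ * (1 + s ^ 2) ^ ((p - 2) / 2) ≤ deriv (deriv F) s :=
    fun s hs => le_deriv_deriv_of_hessian z (w := fun r => γ₁ * (1 + r ^ 2) ^ ((p - 2) / 2))
      hF hΦ hHess hs
  have hF' : γ₁ / p * frob B * (1 + frob B ^ 2) ^ ((p - 2) / 2) ≤ deriv F (frob B) :=
    mul_one_add_sq_rpow_le_of_le_deriv hp.le hγ₁.le (hF.continuous_deriv one_le_two).continuousOn
      hF.differentiable_deriv_two.differentiableOn hF'0 hF'' (frob_nonneg B)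
  calc 1 / p * γ₁ * (1 + frob B ^ 2) ^ ((p - 2) / 2) * frob B ^ 2
      = γ₁ / p * frob B * (1 + frob B ^ 2) ^ ((p - 2) / 2) * frob B := by ring
    _ ≤ deriv F (frob B) * frob B := mul_le_mul_of_nonneg_right hF' (frob_nonneg B)
end

section
/- Let u : ℝ³₊ → ℝ³ be a smooth divergence-free vector field satisfying the perfect slip boundary conditions u₃ = 0 and ∂u₁/∂x₃ = ∂u₂/∂x₃ = 0 on {x₃ = 0}. Then Δu₃ = 0 on the boundary {x₃ = 0}. -/
open Real

/-- Partial derivative `∂f/∂xᵢ`. -/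
noncomputable def pd (i : Fin 3) (f : (Fin 3 → ℝ) → ℝ) (x : Fin 3 → ℝ) : ℝ :=
  fderiv ℝ f x (Pi.single i 1)

private lemma pd_contDiff {f : (Fin 3 → ℝ) → ℝ} (hf : ContDiff ℝ (⊤ : ℕ∞) f) (i : Fin 3) :
    ContDiff ℝ (⊤ : ℕ∞) (pd i f) := by
  have h1 : ContDiff ℝ (⊤ : ℕ∞) (fderiv ℝ f) := hf.fderiv_right (by simp)
  exact h1.clm_apply contDiff_const

/-- Tangential derivative of a boundary-vanishing function vanishes on the boundary. -/
private lemma tang {f : (Fin 3 → ℝ) → ℝ} {x : Fin 3 → ℝ}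
    (hf : DifferentiableAt ℝ f x) (h0 : ∀ y : Fin 3 → ℝ, y 2 = 0 → f y = 0)
    (hx : x 2 = 0) {i : Fin 3} (hi : i ≠ 2) : pd i f x = 0 := by
  set v : Fin 3 → ℝ := Pi.single i 1 with hv
  have hγ : HasDerivAt (fun t : ℝ => x + t • v) v 0 := by
    simpa using ((hasDerivAt_id (0 : ℝ)).smul_const v).const_add x
  have hfd : HasFDerivAt f (fderiv ℝ f x) (x + (0:ℝ) • v) := by simpa using hf.hasFDerivAt
  have hcomp : HasDerivAt (fun t : ℝ => f (x + t • v)) (fderiv ℝ f x v) 0 :=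
    hfd.comp_hasDerivAt 0 hγ
  have hzero : (fun t : ℝ => f (x + t • v)) = fun _ => 0 := by
    funext t
    apply h0
    have : v 2 = 0 := Pi.single_eq_of_ne (fun h => hi h.symm) 1
    simp [hx, this]
  rw [hzero] at hcomp
  have h := hcomp.unique (hasDerivAt_const 0 0)
  simpa [pd, hv] using h

/-- Second derivatives commute for smooth functions. -/
private lemma pd_comm {f : (Fin 3 → ℝ) → ℝ} (hf : ContDiff ℝ (⊤ : ℕ∞) f) (i j : Fin 3)
    (x : Fin 3 → ℝ) : pd i (pd j f) x = pd j (pd i f) x := by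
  have hdf : ContDiff ℝ (⊤ : ℕ∞) (fderiv ℝ f) := hf.fderiv_right (by simp)
  have hdfx : DifferentiableAt ℝ (fderiv ℝ f) x := (hdf.differentiable (by simp)) x
  have key : ∀ a b : Fin 3, pd a (pd b f) x =
      fderiv ℝ (fderiv ℝ f) x (Pi.single a 1) (Pi.single b 1) := by
    intro a b
    have : pd a (pd b f) x
        = fderiv ℝ (fun y => (fderiv ℝ f y) (Pi.single b 1)) x (Pi.single a 1) := rfl
    rw [this, fderiv_clm_apply hdfx (differentiableAt_const _)]
    simp
  rw [key i j, key j i]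
  exact second_derivative_symmetric
    (fun y => ((hf.differentiable (by simp)) y).hasFDerivAt) hdfx.hasFDerivAt _ _

theorem stmt6 (u : (Fin 3 → ℝ) → (Fin 3 → ℝ)) (hu : ContDiff ℝ (⊤ : ℕ∞) u)
    (hdiv : ∀ x, ∑ i, pd i (fun y => u y i) x = 0)
    (hbc : ∀ x : Fin 3 → ℝ, x 2 = 0 →
      u x 2 = 0 ∧ pd 2 (fun y => u y 0) x = 0 ∧ pd 2 (fun y => u y 1) x = 0) :
    ∀ x : Fin 3 → ℝ, x 2 = 0 → ∑ i, pd i (pd i (fun y => u y 2)) x = 0 := by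
  intro x hx
  have hc : ∀ k : Fin 3, ContDiff ℝ (⊤ : ℕ∞) (fun y => u y k) := fun k =>
    (ContinuousLinearMap.proj (R := ℝ) (φ := fun _ : Fin 3 => ℝ) k).contDiff.comp hu
  -- tangential second derivatives of u₂ vanish
  have hT : ∀ i : Fin 3, i ≠ 2 → pd i (pd i (fun y => u y 2)) x = 0 := by
    intro i hi
    refine tang ((pd_contDiff (hc 2) i).differentiable (by simp) x) ?_ hx hi
    intro y hy
    exact tang ((hc 2).differentiable (by simp) y) (fun z hz => (hbc z hz).1) hy hi
  -- normal second derivative via divergence-free condition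
  have hdiv' : pd 2 (fun y => u y 2)
      = fun y => -(pd 0 (fun z => u z 0) y + pd 1 (fun z => u z 1) y) := by
    funext y
    have := hdiv y
    rw [Fin.sum_univ_three] at this
    linarith
  have hd0 : Differentiable ℝ (pd 0 (fun z => u z 0)) :=
    (pd_contDiff (hc 0) 0).differentiable (by simp)
  have hd1 : Differentiable ℝ (pd 1 (fun z => u z 1)) :=
    (pd_contDiff (hc 1) 1).differentiable (by simp)
  have hT2 : pd 2 (pd 2 (fun y => u y 2)) x
      = -(pd 2 (pd 0 (fun z => u z 0)) x + pd 2 (pd 1 (fun z => u z 1)) x) := by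
    rw [hdiv']
    show fderiv ℝ (fun y => -(pd 0 (fun z => u z 0) y + pd 1 (fun z => u z 1) y)) x
      (Pi.single 2 1) = _
    rw [fderiv_fun_neg, fderiv_fun_add (hd0 x) (hd1 x)]
    simp [pd]
  have h20 : pd 2 (pd 0 (fun z => u z 0)) x = 0 := by
    rw [pd_comm (hc 0) 2 0]
    refine tang ((pd_contDiff (hc 0) 2).differentiable (by simp) x) ?_ hx
      (by decide)
    intro y hy
    exact (hbc y hy).2.1
  have h21 : pd 2 (pd 1 (fun z => u z 1)) x = 0 := by
    rw [pd_comm (hc 1) 2 1]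
    refine tang ((pd_contDiff (hc 1) 2).differentiable (by simp) x) ?_ hx
      (by decide)
    intro y hy
    exact (hbc y hy).2.2
  rw [Fin.sum_univ_three, hT 0 (by decide), hT 1 (by decide), hT2, h20, h21]
  ring
end
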